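/- Let n ≥ 2 and let α₁,…,α_g, β₁,…,β_g be elements of F_n. Let h : F → F be the endomorphism determined by h(x_i) = x_i·α_i and h(y_i) = y_i·β_i for 1 ≤ i ≤ g. Then h(ω_g) ≡ ω_g · ∏_{i=1}^g [α_i, y_i]·[x_i, β_i] modulo F_{n+2}. -/

import Mathlib

open scoped commutatorElement

/-!
`Fg g` is the free group `F` on `2g` generators `x₁,…,x_g,y₁,…,y_g`
(`X g i = x_i`, `Y g i = y_i`), `omegaG g = [x₁,y₁]⋯[x_g,y_g]`.
Paper convention: `F_k = lowerCentralSeries (Fg g) (k-1)`, and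
`Q g k = F/F_k`.  `IsA0 g k φ` says that the automorphism `φ` of `F/F_k`
lies in `A₀(F/F_k)`: some endomorphism of `F` lifting `φ` sends `ω_g`
into `ω_g·F_{k+1}`.
-/

abbrev Fg (g : ℕ) := FreeGroup (Fin g × Bool)

def X (g : ℕ) (i : Fin g) : Fg g := FreeGroup.of (i, false)

def Y (g : ℕ) (i : Fin g) : Fg g := FreeGroup.of (i, true)

def omegaG (g : ℕ) : Fg g := ((List.finRange g).map fun i => ⁅X g i, Y g i⁆).prod

/-- `F/F_k` in the paper's indexing of the lower central series. -/
abbrev Q (g k : ℕ) := Fg g ⧸ Subgroup.lowerCentralSeries (⊤ : Subgroup (Fg g)) (k - 1)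

def mkQ (g k : ℕ) : Fg g →* Q g k := QuotientGroup.mk' _

/-- Membership in `A₀(F/F_k)`. -/
def IsA0 (g k : ℕ) (φ : MulAut (Q g k)) : Prop :=
  ∃ h : Fg g →* Fg g,
    (∀ a : Fg g, mkQ g k (h a) = φ (mkQ g k a)) ∧
    (omegaG g)⁻¹ * h (omegaG g) ∈ Subgroup.lowerCentralSeries (⊤ : Subgroup (Fg g)) k

/-- The natural projection `F/F_{k+1} → F/F_k`. -/
def projQ (g k : ℕ) : Q g (k + 1) →* Q g k :=
  QuotientGroup.map _ _ (MonoidHom.id _)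
    (fun x hx => Subgroup.lowerCentralSeries_antitone ⊤ (Nat.sub_le k 1) hx)

/-!
Modulo `F_{n+2}` the commutators `[α,y]`, `[x,β]` are central and `[α,β]` vanishes, since
`[F_a, F_b] ≤ F_{a+b}` (three subgroups lemma). In a group where `[a,y]` and `[x,b]` are
central and `a`, `b` commute, `[x a, y b] = [x,y]·[a,y]·[x,b]`; applying this to each factor
of `h(ω_g) = ∏ [x_i α_i, y_i β_i]` and collecting the central corrections gives the claim.
-/

theorem List.prod_map_mul_of_commute {M ι : Type*} [Monoid M] (l : List ι) (e z : ι → M)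
    (hz : ∀ i w, Commute (z i) w) :
    (l.map fun i => e i * z i).prod = (l.map e).prod * (l.map z).prod := by
  induction l with
  | nil => simp
  | cons a t ih =>
    simp only [List.map_cons, List.prod_cons, ih, mul_assoc, (hz a _).left_comm]

theorem commutatorElement_mul_mul_of_commute {H : Type*} [Group H] {x y a b : H}
    (hay : ∀ w, Commute ⁅a, y⁆ w) (hxb : ∀ w, Commute ⁅x, b⁆ w) (hab : Commute a b) :
    ⁅x * a, y * b⁆ = ⁅x, y⁆ * (⁅a, y⁆ * ⁅x, b⁆) := by
  have hay' : a * y = ⁅a, y⁆ * y * a := by group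
  have hxb' : b * x⁻¹ = x⁻¹ * ⁅x, b⁆ * b := by group
  calc ⁅x * a, y * b⁆
      = x * (a * y) * (b * a⁻¹) * x⁻¹ * b⁻¹ * y⁻¹ := by group
    _ = x * ⁅a, y⁆ * (y * (b * x⁻¹) * b⁻¹ * y⁻¹) := by
        rw [hay', hab.symm.inv_right.eq]; group
    _ = ⁅a, y⁆ * x * (y * (x⁻¹ * ⁅x, b⁆ * b) * b⁻¹ * y⁻¹) := by
        rw [(hay x).eq, hxb']
    _ = ⁅a, y⁆ * (x * y * x⁻¹ * (⁅x, b⁆ * y⁻¹)) := by group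
    _ = ⁅a, y⁆ * ⁅x, y⁆ * ⁅x, b⁆ := by rw [(hxb y⁻¹).eq]; group
    _ = ⁅x, y⁆ * (⁅a, y⁆ * ⁅x, b⁆) := by rw [(hay _).eq, mul_assoc]

namespace Subgroup

variable {G : Type*} [Group G]

theorem commutator_commutator_le_of_rotate {H₁ H₂ H₃ N : Subgroup G} [N.Normal]
    (h₁ : ⁅⁅H₂, H₃⁆, H₁⁆ ≤ N) (h₂ : ⁅⁅H₃, H₁⁆, H₂⁆ ≤ N) : ⁅⁅H₁, H₂⁆, H₃⁆ ≤ N := by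
  simp only [← QuotientGroup.ker_mk' N, ← map_eq_bot_iff, map_commutator] at h₁ h₂ ⊢
  exact commutator_commutator_eq_bot_of_rotate h₁ h₂

theorem commutator_lowerCentralSeries_le (m : ℕ) : ∀ k : ℕ,
    ⁅(⊤ : Subgroup G).lowerCentralSeries m, (⊤ : Subgroup G).lowerCentralSeries k⁆ ≤
      (⊤ : Subgroup G).lowerCentralSeries (m + k + 1)
  | 0 => le_rfl
  | k + 1 => by
    rw [lowerCentralSeries_succ, commutator_comm]
    apply commutator_commutator_le_of_rotate
    · rw [commutator_comm ⊤, ← lowerCentralSeries_succ]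
      exact (commutator_lowerCentralSeries_le (m + 1) k).trans_eq (by congr 1; omega)
    · exact (commutator_mono (commutator_lowerCentralSeries_le m k) le_rfl).trans_eq
        (by rw [← lowerCentralSeries_succ]; congr 1)

end Subgroup

section LowerCentralSeries

open Subgroup

variable {G : Type*} [Group G]

local notation "γ" => Subgroup.lowerCentralSeries (⊤ : Subgroup G)

theorem QuotientGroup.commute_mk_of_commutatorElement_mem {N : Subgroup G} [N.Normal]
    {a b : G} (h : ⁅a, b⁆ ∈ N) : Commute (a : G ⧸ N) b :=
  commutatorElement_eq_one_iff_commute.mp ((QuotientGroup.eq_one_iff ⁅a, b⁆).mpr h)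

theorem commute_mk_of_mem_lowerCentralSeries {k : ℕ} {z : G} (hz : z ∈ γ k)
    (w : G ⧸ γ (k + 1)) : Commute (z : G ⧸ γ (k + 1)) w := by
  induction w using QuotientGroup.induction_on with
  | H u =>
    exact QuotientGroup.commute_mk_of_commutatorElement_mem
      (commutator_mem_commutator hz (mem_top u))

theorem commutatorElement_mem_lowerCentralSeries_succ_left {k : ℕ} {a : G} (ha : a ∈ γ k)
    (y : G) : ⁅a, y⁆ ∈ γ (k + 1) :=
  commutator_mem_commutator ha (mem_top y)

theorem commutatorElement_mem_lowerCentralSeries_succ_right {k : ℕ} (x : G) {b : G}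
    (hb : b ∈ γ k) : ⁅x, b⁆ ∈ γ (k + 1) := by
  rw [← commutatorElement_inv]
  exact inv_mem (commutatorElement_mem_lowerCentralSeries_succ_left hb x)

theorem mk_commutatorElement_mul_mul {k : ℕ} (hk : 1 ≤ k) (x y : G) {a b : G}
    (ha : a ∈ γ k) (hb : b ∈ γ k) :
    ((⁅x * a, y * b⁆ : G) : G ⧸ γ (k + 2)) = ⁅x, y⁆ * (⁅a, y⁆ * ⁅x, b⁆ : G) := by
  have hab : ⁅a, b⁆ ∈ γ (k + 2) :=
    Subgroup.lowerCentralSeries_antitone ⊤ (by omega) (commutator_lowerCentralSeries_le k k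
      (commutator_mem_commutator ha hb))
  exact commutatorElement_mul_mul_of_commute (x := (x : G ⧸ γ (k + 2))) (y := y)
    (commute_mk_of_mem_lowerCentralSeries
      (commutatorElement_mem_lowerCentralSeries_succ_left ha y))
    (commute_mk_of_mem_lowerCentralSeries
      (commutatorElement_mem_lowerCentralSeries_succ_right x hb))
    (QuotientGroup.commute_mk_of_commutatorElement_mem hab)

end LowerCentralSeries

theorem endo_omega_congruence_general (g n : ℕ) (hn : 2 ≤ n)
    (α β : Fin g → Fg g)
    (hα : ∀ i, α i ∈ Subgroup.lowerCentralSeries (⊤ : Subgroup (Fg g)) (n - 1))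
    (hβ : ∀ i, β i ∈ Subgroup.lowerCentralSeries (⊤ : Subgroup (Fg g)) (n - 1))
    (h : Fg g →* Fg g)
    (hx : ∀ i, h (X g i) = X g i * α i)
    (hy : ∀ i, h (Y g i) = Y g i * β i) :
    (omegaG g * ((List.finRange g).map fun i => ⁅α i, Y g i⁆ * ⁅X g i, β i⁆).prod)⁻¹ *
      h (omegaG g) ∈ Subgroup.lowerCentralSeries (⊤ : Subgroup (Fg g)) (n + 1) := by
  have hk : 1 ≤ n - 1 := by omega
  rw [show n + 1 = n - 1 + 2 by omega]
  set π := QuotientGroup.mk' ((⊤ : Subgroup (Fg g)).lowerCentralSeries (n - 1 + 2))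
  have hcorr : ∀ i w, Commute (π (⁅α i, Y g i⁆ * ⁅X g i, β i⁆)) w := fun i w => by
    rw [map_mul]
    exact (commute_mk_of_mem_lowerCentralSeries
      (commutatorElement_mem_lowerCentralSeries_succ_left (hα i) _) w).mul_left
      (commute_mk_of_mem_lowerCentralSeries
        (commutatorElement_mem_lowerCentralSeries_succ_right _ (hβ i)) w)
  refine QuotientGroup.eq.mp ?_
  calc π (omegaG g * ((List.finRange g).map fun i => ⁅α i, Y g i⁆ * ⁅X g i, β i⁆).prod)
      = ((List.finRange g).map fun i =>
          π ⁅X g i, Y g i⁆ * π (⁅α i, Y g i⁆ * ⁅X g i, β i⁆)).prod := by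
        rw [List.prod_map_mul_of_commute _ _ _ hcorr, map_mul, omegaG, map_list_prod,
          map_list_prod, List.map_map, List.map_map]
        rfl
    _ = π (h (omegaG g)) := by
        simp only [omegaG, map_list_prod, List.map_map]
        congr 1
        refine List.map_congr_left fun i _ => ?_
        rw [Function.comp_apply, Function.comp_apply, map_commutatorElement h, hx, hy]
        exact (mk_commutatorElement_mul_mul hk _ _ (hα i) (hβ i)).symm

/-- if `h(x_i) = x_i·α_i` and `h(y_i) = y_i·β_i` with `α_i, β_i ∈ F_n`,
then `h(ω_g) ≡ ω_g · ∏_i [α_i,y_i]·[x_i,β_i]` modulo `F_{n+2}`. -/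
theorem endo_omega_congruence (g n : ℕ) (hg : 1 ≤ g) (hn : 2 ≤ n)
    (α β : Fin g → Fg g)
    (hα : ∀ i, α i ∈ Subgroup.lowerCentralSeries (⊤ : Subgroup (Fg g)) (n - 1))
    (hβ : ∀ i, β i ∈ Subgroup.lowerCentralSeries (⊤ : Subgroup (Fg g)) (n - 1))
    (h : Fg g →* Fg g)
    (hx : ∀ i, h (X g i) = X g i * α i)
    (hy : ∀ i, h (Y g i) = Y g i * β i) :
    (omegaG g * ((List.finRange g).map fun i => ⁅α i, Y g i⁆ * ⁅X g i, β i⁆).prod)⁻¹ *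
      h (omegaG g) ∈ Subgroup.lowerCentralSeries (⊤ : Subgroup (Fg g)) (n + 1) :=
  endo_omega_congruence_general g n hn α β hα hβ h hx hy
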